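/- arXiv:1511.03784 — 6 statements merged into one kernel-verified Lean document; each statement's English description precedes it below -/
import Mathlib

section
/- Let A be a commutative ring and let I ⊆ A be an ideal which is projective as an A-module. Then for every integer m ≥ 1 the multiplication map I^{⊗_A m} → A, x₁ ⊗ ⋯ ⊗ x_m ↦ x₁·⋯·x_m, is injective, and its image is the ideal power I^m; in particular I^{⊗_A m} is isomorphic to I^m as an A-module. -/
/-!
Since `I` is projective, it is flat, so `I ⊗ -` preserves injectivity. The multiplication map
on `I^{⊗(k+2)}` is `I ⊗` (the multiplication map on `I^{⊗(k+1)}`) followed by the embedding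
`I ⊗ A ≅ I ⊆ A`, so injectivity follows by induction on `k`; the image is computed by the same
induction as `I * I^(k+1) = I^(k+2)`.
-/

open TensorProduct

noncomputable section

/-- The iterated tensor power of an ideal: `tpowM A I k = I^{⊗(k+1)}`. -/
def tpowM (A : Type) [CommRing A] (I : Ideal A) : ℕ → ModuleCat A
  | 0 => ModuleCat.of A I
  | (k + 1) => ModuleCat.of A (↥I ⊗[A] (tpowM A I k))

/-- The multiplication map `I^{⊗(k+1)} → A`, `x₁ ⊗ ⋯ ⊗ x_{k+1} ↦ x₁ ⋯ x_{k+1}`. -/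
def mulMap (A : Type) [CommRing A] (I : Ideal A) :
    ∀ k : ℕ, (tpowM A I k : Type) →ₗ[A] A
  | 0 => I.subtype
  | (k + 1) =>
      TensorProduct.lift (((LinearMap.mul A A).comp I.subtype).compl₂ (mulMap A I k))

namespace mulMap

variable {A : Type} [CommRing A] (I : Ideal A)

theorem succ_eq_subtype_comp_lTensor (k : ℕ) :
    mulMap A I (k + 1) =
      I.subtype ∘ₗ (TensorProduct.rid A I).toLinearMap ∘ₗ (mulMap A I k).lTensor I :=
  TensorProduct.ext' fun _ _ => by simp [mulMap, mul_comm]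

theorem succ_eq_mulMap_comp_lTensor_rangeRestrict (k : ℕ) :
    mulMap A I (k + 1) =
      Submodule.mulMap I (LinearMap.range (mulMap A I k)) ∘ₗ
        (mulMap A I k).rangeRestrict.lTensor I :=
  TensorProduct.ext' fun _ _ => rfl

theorem range_succ (k : ℕ) :
    LinearMap.range (mulMap A I (k + 1)) = I * LinearMap.range (mulMap A I k) := by
  have hsurj := LinearMap.lTensor_surjective I (mulMap A I k).surjective_rangeRestrict
  calc LinearMap.range (mulMap A I (k + 1))
      = LinearMap.range (Submodule.mulMap I (LinearMap.range (mulMap A I k))) := by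
        rw [succ_eq_mulMap_comp_lTensor_rangeRestrict]
        exact LinearMap.range_comp_of_range_eq_top _ (LinearMap.range_eq_top.2 hsurj)
    _ = I * LinearMap.range (mulMap A I k) := Submodule.mulMap_range _ _

theorem range_eq_pow (k : ℕ) : LinearMap.range (mulMap A I k) = I ^ (k + 1) := by
  induction k with
  | zero => exact (Submodule.range_subtype I).trans (pow_one I).symm
  | succ k ih => rw [range_succ, ih, ← pow_succ']

theorem injective [Module.Flat A I] (k : ℕ) : Function.Injective (mulMap A I k) := by
  induction k with
  | zero => exact Subtype.coe_injective
  | succ k ih =>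
    rw [succ_eq_subtype_comp_lTensor]
    exact Subtype.coe_injective.comp <| (TensorProduct.rid A I).injective.comp <|
      Module.Flat.lTensor_preserves_injective_linearMap _ ih

end mulMap

/-- If an ideal `I` of a commutative ring `A` is projective as an `A`-module,
then for every `m ≥ 1` (here `m = k + 1`) the multiplication map
`I^{⊗m} → A` is injective with image the ideal power `I^m`; in particular
`I^{⊗m} ≅ I^m` as `A`-modules. -/
theorem stmt2 (A : Type) [CommRing A] (I : Ideal A)
    (hproj : Module.Projective A ↥I) :
    ∀ k : ℕ,
      Function.Injective (mulMap A I k) ∧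
      LinearMap.range (mulMap A I k) = I ^ (k + 1) ∧
      Nonempty ((tpowM A I k : Type) ≃ₗ[A] ↥(I ^ (k + 1))) := fun k =>
  ⟨mulMap.injective I k, mulMap.range_eq_pow I k,
    ⟨(LinearEquiv.ofInjective _ (mulMap.injective I k)).trans
      (LinearEquiv.ofEq _ _ (mulMap.range_eq_pow I k))⟩⟩

end
end

section
/- Let p be a prime, m ≥ 1 an integer, n = p^m, and let A be a commutative ring whose underlying additive group is a finitely generated abelian group. Suppose that for every maximal ideal 𝔪 of A with p ∈ 𝔪, the integer n is not a power of the cardinality of the (finite) residue field A/𝔪, i.e. there is no integer j ≥ 1 with n = card(A/𝔪)^j. Then I^A_{p^m} = A. -/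
lemma aux_dvd {p : ℕ} (hp : 2 ≤ p) {r : ℕ} (hr : 0 < r) :
    ∀ m : ℕ, p ^ r - 1 ∣ p ^ m - 1 → r ∣ m := by
  intro m
  induction m using Nat.strong_induction_on with
  | _ m ih =>
    intro hdvd
    rcases Nat.eq_zero_or_pos m with rfl | hm
    · exact Dvd.intro 0 rfl
    rcases lt_or_ge m r with hlt | hle
    · have h1 : 0 < p ^ m - 1 := by
        have : 2 ≤ p ^ m := le_trans hp (Nat.le_self_pow hm.ne' p)
        omega
      have h2 : p ^ m < p ^ r := Nat.pow_lt_pow_right (by omega) hlt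
      have := Nat.le_of_dvd h1 hdvd
      omega
    · have key : p ^ (m - r) - 1 = (p ^ m - 1) - p ^ (m - r) * (p ^ r - 1) := by
        have hab : p ^ (m - r) * p ^ r = p ^ m := by
          rw [← pow_add, Nat.sub_add_cancel hle]
        have ha : 1 ≤ p ^ (m - r) := Nat.one_le_pow _ _ (by omega)
        have hb : 1 ≤ p ^ r := Nat.one_le_pow _ _ (by omega)
        have hmul : p ^ (m - r) * (p ^ r - 1) = p ^ m - p ^ (m - r) := by
          rw [Nat.mul_sub, hab, mul_one]
        rw [hmul]
        have : p ^ (m - r) ≤ p ^ m := Nat.pow_le_pow_right (by omega) (by omega)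
        omega
      have hdvd' : p ^ r - 1 ∣ p ^ (m - r) - 1 := by
        rw [key]
        exact Nat.dvd_sub hdvd (dvd_mul_left _ _)
      have hrec := ih (m - r) (by omega) hdvd'
      have : r ∣ (m - r) + r := Nat.dvd_add hrec dvd_rfl
      rwa [Nat.sub_add_cancel hle] at this

lemma field_aux (p m : ℕ) (hp : p.Prime) (hm : 1 ≤ m) (k : Type) [Field k]
    (hpow : ∀ x : k, x ^ p ^ m = x) (hpk : (p : k) = 0) :
    ∃ j : ℕ, 1 ≤ j ∧ p ^ m = Nat.card k ^ j := by
  have hpm1 : 1 < p ^ m := Nat.one_lt_pow (by omega) hp.one_lt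
  haveI : Finite k := by
    have hne0 : (Polynomial.X ^ p ^ m - Polynomial.X : Polynomial k) ≠ 0 :=
      FiniteField.X_pow_card_pow_sub_X_ne_zero _ (by omega) hp.one_lt
    have hfin := Polynomial.finite_setOf_isRoot hne0
    have : (Set.univ : Set k).Finite := by
      refine hfin.subset fun x _ => ?_
      simp [Polynomial.IsRoot, hpow x]
    exact Set.finite_univ_iff.mp this
  haveI : Fintype k := Fintype.ofFinite k
  haveI : CharP k p := (CharP.charP_iff_prime_eq_zero hp).2 hpk
  obtain ⟨r, hp', hcard⟩ := FiniteField.card k p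
  have hdvd : Fintype.card k - 1 ∣ p ^ m - 1 := by
    rw [← FiniteField.forall_pow_eq_one_iff]
    intro x
    have hx : x ^ p ^ m = x := Units.ext (by
      push_cast
      exact hpow (x : k))
    have hxx : x ^ (p ^ m - 1) * x = 1 * x := by
      rw [one_mul, ← pow_succ, Nat.sub_add_cancel hpm1.le, hx]
    exact mul_right_cancel hxx
  rw [hcard] at hdvd
  have hr : (r : ℕ) ∣ m := aux_dvd hp.two_le r.pos m hdvd
  refine ⟨m / r, ?_, ?_⟩
  · exact (Nat.one_le_div_iff r.pos).2 (Nat.le_of_dvd (by omega) hr)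
  · rw [Nat.card_eq_fintype_card, hcard, ← pow_mul, Nat.mul_div_cancel' hr]

/-- `I^A_{p^m}`: the ideal of `A` generated by `p` together with all elements
of the form `a - a ^ (p ^ m)` for `a ∈ A`. -/
def Iideal (p m : ℕ) (A : Type) [CommRing A] : Ideal A :=
  Ideal.span ({(p : A)} ∪ Set.range fun a : A => a - a ^ p ^ m)

theorem stmt9 (p m : ℕ) (hp : p.Prime) (hm : 1 ≤ m)
    (A : Type) [CommRing A] (hA : AddGroup.FG A)
    (h : ∀ 𝔪 : Ideal A, 𝔪.IsMaximal → (p : A) ∈ 𝔪 →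
      ¬ ∃ j : ℕ, 1 ≤ j ∧ p ^ m = Nat.card (A ⧸ 𝔪) ^ j) :
    Iideal p m A = ⊤ := by
  by_contra hne
  obtain ⟨𝔪, hmax, hle⟩ := Ideal.exists_le_maximal _ hne
  haveI := hmax
  have hp𝔪 : (p : A) ∈ 𝔪 := hle (Ideal.subset_span (Or.inl rfl))
  have hsub : ∀ a : A, a - a ^ p ^ m ∈ 𝔪 := fun a =>
    hle (Ideal.subset_span (Or.inr ⟨a, rfl⟩))
  letI : Field (A ⧸ 𝔪) := Ideal.Quotient.field 𝔪
  have hpow : ∀ x : A ⧸ 𝔪, x ^ p ^ m = x := by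
    intro x
    obtain ⟨a, rfl⟩ := Ideal.Quotient.mk_surjective x
    have h0 : Ideal.Quotient.mk 𝔪 (a - a ^ p ^ m) = 0 :=
      (Ideal.Quotient.eq_zero_iff_mem).2 (hsub a)
    rw [map_sub, map_pow, sub_eq_zero] at h0
    exact h0.symm
  have hpk : ((p : ℕ) : A ⧸ 𝔪) = 0 := by
    rw [← map_natCast (Ideal.Quotient.mk 𝔪), Ideal.Quotient.eq_zero_iff_mem]
    exact hp𝔪
  exact h 𝔪 hmax hp𝔪 (field_aux p m hp hm _ hpow hpk)
end

section
/- Let p be a prime, m ≥ 1 an integer, n = p^m, and let A be a commutative local ring whose underlying additive group is a finitely generated abelian group, with maximal ideal 𝔪 satisfying p ∈ 𝔪. Then I^A_{p^m} = A if and only if n is not a power of the cardinality of the (finite) residue field A/𝔪, i.e. if and only if there is no integer j ≥ 1 with n = card(A/𝔪)^j. -/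
/-- If `p ^ d - 1 ∣ p ^ m - 1` with `2 ≤ p`, then `d ∣ m`. -/
lemma aux_dvd_of_pow_sub_one_dvd {p d m : ℕ} (hp : 2 ≤ p) (hd : 0 < d)
    (h : p ^ d - 1 ∣ p ^ m - 1) : d ∣ m := by
  obtain ⟨X, hX⟩ : ∃ X, p ^ (m % d) = X := ⟨_, rfl⟩
  have h4 : 1 ≤ X := hX ▸ Nat.one_le_pow _ _ (by omega)
  have h7 : p ^ d - 1 ∣ X - 1 := by
    have h1 : p ^ d - 1 ∣ p ^ (d * (m / d)) - 1 := by
      rw [pow_mul]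
      simpa using Nat.sub_dvd_pow_sub_pow (p ^ d) 1 (m / d)
    have h2 : p ^ d - 1 ∣ X * (p ^ (d * (m / d)) - 1) := h1.mul_left _
    have key : X - 1 = (p ^ m - 1) - X * (p ^ (d * (m / d)) - 1) := by
      have h5 : p ^ m = X * p ^ (d * (m / d)) := by
        rw [← hX, ← pow_add, Nat.mod_add_div]
      have h6 : X ≤ p ^ m := by
        rw [← hX]; exact Nat.pow_le_pow_right (by omega) (Nat.mod_le m d)
      rw [Nat.mul_sub_left_distrib, mul_one, ← h5]
      omega
    rw [key]; exact Nat.dvd_sub h h2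
  have h8 : X - 1 < p ^ d - 1 := by
    have hlt : X < p ^ d := by
      rw [← hX]; exact Nat.pow_lt_pow_right hp (Nat.mod_lt m hd)
    omega
  have h9 : X - 1 = 0 := Nat.eq_zero_of_dvd_of_lt h7 h8
  have h10 : p ^ (m % d) = 1 := by rw [hX]; omega
  have hmod : m % d = 0 := by
    by_contra hne
    have hle : p ≤ p ^ (m % d) := by
      calc p = p ^ 1 := (pow_one p).symm
        _ ≤ p ^ (m % d) := Nat.pow_le_pow_right (by omega) (by omega)
    rw [h10] at hle; omega
  exact Nat.dvd_of_mod_eq_zero hmod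

/-- In a finite field `K` of characteristic `p`, all elements satisfy
`x ^ p ^ m = x` (with `m ≥ 1`) iff `p ^ m` is a power `card K ^ j`, `j ≥ 1`. -/
lemma aux_field {K : Type} [Field K] [Fintype K] (p m : ℕ) (hp : p.Prime)
    (hm : 1 ≤ m) [CharP K p] :
    (∀ x : K, x ^ p ^ m = x) ↔ ∃ j : ℕ, 1 ≤ j ∧ p ^ m = Fintype.card K ^ j := by
  obtain ⟨d, -, hcard⟩ := FiniteField.card K p
  constructor
  · intro h
    have hu : ∀ u : Kˣ, u ^ (p ^ m - 1) = 1 := by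
      intro u
      have h2 : (u : K) ^ (p ^ m) = u := h u
      have h3 : u ^ (p ^ m) = u := Units.ext (by push_cast; exact h2)
      have hn : p ^ m = (p ^ m - 1) + 1 := by
        have : 1 ≤ p ^ m := Nat.one_le_pow _ _ hp.pos
        omega
      rw [hn, pow_succ] at h3
      exact mul_right_cancel (by rw [one_mul]; exact h3)
    have hdvd : Fintype.card K - 1 ∣ p ^ m - 1 :=
      (FiniteField.forall_pow_eq_one_iff K _).mp hu
    rw [hcard] at hdvd
    have hddvd : (d : ℕ) ∣ m := aux_dvd_of_pow_sub_one_dvd hp.two_le d.pos hdvd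
    obtain ⟨j, hj⟩ := hddvd
    refine ⟨j, ?_, ?_⟩
    · rcases Nat.eq_zero_or_pos j with h0 | h1
      · subst h0; simp at hj; omega
      · exact h1
    · rw [hcard, ← pow_mul, ← hj]
  · rintro ⟨j, hj1, hj2⟩
    intro x
    rw [hj2]
    exact FiniteField.pow_card_pow j x

theorem stmt10 (p m : ℕ) (hp : p.Prime) (hm : 1 ≤ m)
    (A : Type) [CommRing A] [IsLocalRing A] (hA : AddGroup.FG A)
    (hpm : (p : A) ∈ IsLocalRing.maximalIdeal A) :
    Iideal p m A = ⊤ ↔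
      ¬ ∃ j : ℕ, 1 ≤ j ∧
        p ^ m = Nat.card (A ⧸ IsLocalRing.maximalIdeal A) ^ j := by
  set 𝔪 := IsLocalRing.maximalIdeal A
  let K := A ⧸ 𝔪
  letI : Field K := Ideal.Quotient.field 𝔪
  -- K is finite
  have hKfg : AddGroup.FG K :=
    AddGroup.fg_of_surjective (f := (Ideal.Quotient.mk 𝔪).toAddMonoidHom)
      Ideal.Quotient.mk_surjective
  have hpK : (p : K) = 0 := by
    rw [show ((p : ℕ) : K) = Ideal.Quotient.mk 𝔪 (p : A) by rfl,
      Ideal.Quotient.eq_zero_iff_mem]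
    exact hpm
  haveI : Finite K := by
    apply AddCommGroup.finite_of_fg_torsion
    intro x
    rw [isOfFinAddOrder_iff_nsmul_eq_zero]
    exact ⟨p, hp.pos, by rw [nsmul_eq_mul, hpK, zero_mul]⟩
  haveI : Fintype K := Fintype.ofFinite K
  haveI : CharP K p := by
    have hchar : ringChar K ∣ p := ringChar.dvd hpK
    have h1ne : ringChar K ≠ 1 := by
      intro h
      have : ((1 : ℕ) : K) = 0 := (ringChar.spec K 1).mpr (by rw [h])
      simp at this
    have : ringChar K = p := by
      rcases Nat.Prime.eq_one_or_self_of_dvd hp _ hchar with h1 | h1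
      · exact absurd h1 h1ne
      · exact h1
    rw [← this]; exact ringChar.charP K
  -- Main chain of iffs
  have hiff1 : Iideal p m A = ⊤ ↔ ¬ Iideal p m A ≤ 𝔪 := by
    constructor
    · intro h hle
      rw [h, top_le_iff] at hle
      exact (Ideal.IsMaximal.ne_top (IsLocalRing.maximalIdeal.isMaximal A)) hle
    · intro h
      by_contra hne
      exact h (IsLocalRing.le_maximalIdeal hne)
  have hiff2 : Iideal p m A ≤ 𝔪 ↔ ∀ x : K, x ^ p ^ m = x := by
    rw [Iideal, Ideal.span_le]
    constructor
    · intro h x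
      obtain ⟨a, rfl⟩ := Ideal.Quotient.mk_surjective x
      have : a - a ^ p ^ m ∈ 𝔪 := h (Or.inr ⟨a, rfl⟩)
      have := (Ideal.Quotient.eq_zero_iff_mem).mpr this
      rw [map_sub, map_pow, sub_eq_zero] at this
      exact this.symm
    · rintro h x (hx | ⟨a, rfl⟩)
      · rw [Set.mem_singleton_iff] at hx
        rw [hx]; exact hpm
      · show a - a ^ p ^ m ∈ 𝔪
        rw [← Ideal.Quotient.eq_zero_iff_mem, map_sub, map_pow, sub_eq_zero]
        exact (h (Ideal.Quotient.mk 𝔪 a)).symm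
  rw [hiff1, hiff2, aux_field p m hp hm, Nat.card_eq_fintype_card]
end

section
/- Let A be a commutative ring, p a prime, m ≥ 1 an integer, and let α₁, …, α_j ∈ A be elements such that the underlying additive group of A is generated by 1, α₁, …, α_j. Then I^A_{p^m} equals the ideal of A generated by the finite set {p, α₁ − α₁^{p^m}, α₂ − α₂^{p^m}, …, α_j − α_j^{p^m}}. -/
theorem stmt12 (A : Type) [CommRing A] (p m : ℕ) (hp : p.Prime) (hm : 1 ≤ m)
    (j : ℕ) (α : Fin j → A)
    (hgen : AddSubgroup.closure (insert (1 : A) (Set.range α)) = ⊤) :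
    Iideal p m A =
      Ideal.span (insert (p : A) (Set.range fun i => α i - α i ^ p ^ m)) := by
  set q := p ^ m with hq
  set J := Ideal.span (insert (p : A) (Set.range fun i => α i - α i ^ q)) with hJ
  have hpJ : (p : A) ∈ J := Ideal.subset_span (Set.mem_insert _ _)
  -- the quotient ring
  let R := A ⧸ J
  let π : A →+* R := Ideal.Quotient.mk J
  have hp0 : (p : R) = 0 := by
    simpa [π] using (Ideal.Quotient.eq_zero_iff_mem.mpr hpJ)
  have hadd : ∀ x y : R, (x + y) ^ q = x ^ q + y ^ q := by
    intro x y
    rw [hq, add_pow_prime_pow_eq hp x y m, hp0]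
    ring
  have hq0 : q ≠ 0 := pow_ne_zero m hp.pos.ne'
  -- the additive subgroup of fixed points
  let S : AddSubgroup R :=
    { carrier := {x : R | x ^ q = x}
      zero_mem' := by simp [zero_pow hq0]
      add_mem' := by
        intro x y hx hy
        simp only [Set.mem_setOf_eq] at *
        rw [hadd, hx, hy]
      neg_mem' := by
        intro x hx
        simp only [Set.mem_setOf_eq] at *
        have := hadd x (-x)
        rw [add_neg_cancel, zero_pow hq0, hx] at this
        have : (-x) ^ q = -x := by linear_combination -this
        exact this }
  have hall : ∀ a : A, π a ∈ S := by
    intro a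
    have hle : AddSubgroup.closure (insert (1 : A) (Set.range α)) ≤
        S.comap π.toAddMonoidHom := by
      apply AddSubgroup.closure_le _ |>.mpr
      rintro x (rfl | ⟨i, rfl⟩)
      · show (π 1) ^ q = π 1
        simp
      · show (π (α i)) ^ q = π (α i)
        have : α i - α i ^ q ∈ J :=
          Ideal.subset_span (Set.mem_insert_iff.mpr (Or.inr ⟨i, rfl⟩))
        have h0 : π (α i - α i ^ q) = 0 := Ideal.Quotient.eq_zero_iff_mem.mpr this
        rw [map_sub, map_pow, sub_eq_zero] at h0
        exact h0.symm
    have := hle (hgen ▸ AddSubgroup.mem_top a)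
    exact this
  have key : ∀ a : A, a - a ^ q ∈ J := by
    intro a
    have := hall a
    have h : π (a - a ^ q) = 0 := by
      rw [map_sub, map_pow]
      rw [sub_eq_zero]
      exact (this : (π a) ^ q = π a).symm
    exact Ideal.Quotient.eq_zero_iff_mem.mp h
  apply le_antisymm
  · rw [Iideal, Ideal.span_le]
    rintro x (rfl | ⟨a, rfl⟩)
    · exact hpJ
    · exact key a
  · rw [hJ, Ideal.span_le]
    rintro x (rfl | ⟨i, rfl⟩)
    · exact Ideal.subset_span (Or.inl rfl)
    · exact Ideal.subset_span (Or.inr ⟨α i, rfl⟩)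
end

section
/- Let A = ℤ[√−5] = {a + b√−5 : a, b ∈ ℤ}. Then for every integer m ≥ 1, the ideal I^A_{2^m} equals the ideal of A generated by 2 and √−5 − 1, and this ideal is not a principal ideal. -/
section Iideal

variable {A : Type} [CommRing A]

lemma natCast_mem_Iideal (p m : ℕ) : (p : A) ∈ Iideal p m A :=
  Ideal.subset_span (Or.inl rfl)

lemma sub_pow_mem_Iideal (p m : ℕ) (a : A) : a - a ^ p ^ m ∈ Iideal p m A :=
  Ideal.subset_span (Or.inr ⟨a, rfl⟩)

lemma Iideal_le_ker {p : ℕ} [Fact p.Prime] (m : ℕ) (f : A →+* ZMod p) :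
    Iideal p m A ≤ RingHom.ker f := by
  rw [Iideal, Ideal.span_le]
  rintro x (rfl | ⟨a, rfl⟩)
  · simp
  · simp [ZMod.pow_card_pow]

end Iideal

open Zsqrtd

def toZModTwo : ℤ√(-5) →+* ZMod 2 := lift ⟨1, by decide⟩

lemma toZModTwo_apply (a : ℤ√(-5)) : toZModTwo a = a.re + a.im := by
  simp [toZModTwo, lift_apply_apply]

lemma ker_toZModTwo :
    RingHom.ker toZModTwo = Ideal.span {(2 : ℤ√(-5)), sqrtd - 1} := by
  apply _root_.le_antisymm
  · intro a ha
    rw [RingHom.mem_ker, toZModTwo_apply, ← Int.cast_add,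
      ZMod.intCast_zmod_eq_zero_iff_dvd] at ha
    obtain ⟨c, hc⟩ := ha
    have ha : a = 2 * (c : ℤ√(-5)) + (sqrtd - 1) * (a.im : ℤ√(-5)) := by
      push_cast at hc
      ext <;> simp [← hc]
    rw [ha]
    exact Ideal.add_mem _ (Ideal.mul_mem_right _ _ (Ideal.subset_span (by simp)))
      (Ideal.mul_mem_right _ _ (Ideal.subset_span (by simp)))
  · rw [Ideal.span_le]
    rintro x (rfl | rfl) <;> rw [SetLike.mem_coe, RingHom.mem_ker, toZModTwo_apply] <;> decide

lemma sqrtd_sub_one_mem_Iideal {m : ℕ} (hm : 1 ≤ m) :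
    (sqrtd - 1 : ℤ√(-5)) ∈ Iideal 2 m (ℤ√(-5)) := by
  obtain ⟨k, rfl⟩ : ∃ k, m = k + 1 := ⟨m - 1, by omega⟩
  set I := Iideal 2 (k + 1) (ℤ√(-5))
  -- `√-5 ^ 2 ^ (k + 1) ≡ 1` modulo `√-5 ^ 2 - 1 = -6`, hence modulo `2`.
  have hdvd : (sqrtd : ℤ√(-5)) ^ 2 - 1 ∣ sqrtd ^ 2 ^ (k + 1) - 1 := by
    rw [pow_succ' 2 k, pow_mul]
    simpa only [one_pow] using sub_dvd_pow_sub_pow ((sqrtd : ℤ√(-5)) ^ 2) 1 (2 ^ k)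
  have hsix : (sqrtd : ℤ√(-5)) ^ 2 - 1 = 2 * (-3) := by
    rw [sq, dmuld]; norm_num
  have hpow : (sqrtd : ℤ√(-5)) ^ 2 ^ (k + 1) - 1 ∈ I :=
    Ideal.mem_of_dvd _ hdvd (hsix ▸ I.mul_mem_right _ (natCast_mem_Iideal 2 _))
  simpa using I.add_mem (sub_pow_mem_Iideal 2 (k + 1) sqrtd) hpow

lemma norm_ne_two (z : ℤ√(-5)) : z.norm ≠ 2 := by
  have hsq : ∀ x : ZMod 5, x ^ 2 ≠ 2 := by decide
  intro h
  apply hsq z.re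
  have h5 := congrArg (Int.cast : ℤ → ZMod 5) h
  rw [norm_def] at h5
  push_cast at h5
  reduce_mod_char at h5
  linear_combination h5

lemma isUnit_of_dvd_two_of_dvd_sqrtd_sub_one {g : ℤ√(-5)} (h2 : g ∣ 2) (hd : g ∣ sqrtd - 1) :
    IsUnit g := by
  have h4 : g.norm ∣ 4 := map_dvd normMonoidHom h2
  have h6 : g.norm ∣ 6 := map_dvd normMonoidHom hd
  have hnorm : g.norm ∣ 2 := by simpa using dvd_sub h6 h4
  have hle := Int.le_of_dvd two_pos hnorm
  have hnonneg := norm_nonneg (by norm_num) g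
  have hne0 : g.norm ≠ 0 := fun h => by simp [h] at hnorm
  have hne2 := norm_ne_two g
  rw [← norm_eq_one_iff' (by norm_num)]
  omega

lemma not_isPrincipal_span_two_sqrtd_sub_one :
    ¬ (Ideal.span {(2 : ℤ√(-5)), sqrtd - 1}).IsPrincipal := by
  rintro ⟨g, hg⟩
  rw [Ideal.submodule_span_eq] at hg
  have hg2 : g ∣ 2 := Ideal.mem_span_singleton.mp (hg ▸ Ideal.subset_span (by simp))
  have hgd : g ∣ sqrtd - 1 := Ideal.mem_span_singleton.mp (hg ▸ Ideal.subset_span (by simp))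
  apply RingHom.ker_ne_top toZModTwo
  rw [ker_toZModTwo, hg, Ideal.span_singleton_eq_top]
  exact isUnit_of_dvd_two_of_dvd_sqrtd_sub_one hg2 hgd

theorem stmt14 (m : ℕ) (hm : 1 ≤ m) :
    Iideal 2 m (Zsqrtd (-5)) =
      Ideal.span {(2 : Zsqrtd (-5)), Zsqrtd.sqrtd - 1} ∧
    ¬ (Iideal 2 m (Zsqrtd (-5))).IsPrincipal := by
  have h : Iideal 2 m (ℤ√(-5)) = Ideal.span {2, sqrtd - 1} := by
    refine _root_.le_antisymm (ker_toZModTwo ▸ Iideal_le_ker m toZModTwo) ?_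
    rw [Ideal.span_le, Set.insert_subset_iff, Set.singleton_subset_iff]
    exact ⟨by exact_mod_cast natCast_mem_Iideal 2 m, sqrtd_sub_one_mem_Iideal hm⟩
  exact ⟨h, h ▸ not_isPrincipal_span_two_sqrtd_sub_one⟩
end

section
/- Let A = ℤ[√−5] = {a + b√−5 : a, b ∈ ℤ}. Then for every integer m ≥ 1, the ideal I^A_{5^m} equals the principal ideal of A generated by √−5. -/
lemma int_fermat (m : ℕ) (n : ℤ) : (5 : ℤ) ∣ n ^ 5 ^ m - n := by
  haveI : Fact (Nat.Prime 5) := ⟨by norm_num⟩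
  have : ((n ^ 5 ^ m - n : ℤ) : ZMod 5) = 0 := by
    push_cast
    rw [ZMod.pow_card_pow]
    ring
  exact_mod_cast (ZMod.intCast_zmod_eq_zero_iff_dvd _ 5).mp this

theorem stmt15 (m : ℕ) (hm : 1 ≤ m) :
    Iideal 5 m (Zsqrtd (-5)) =
      Ideal.span {(Zsqrtd.sqrtd : Zsqrtd (-5))} := by
  set d : Zsqrtd (-5) := Zsqrtd.sqrtd with hd
  have hdd : d * d = -5 := by
    ext <;> simp [hd, Zsqrtd.re_mul, Zsqrtd.im_mul]
  have hd5 : d ∣ (5 : Zsqrtd (-5)) := ⟨-d, by rw [mul_neg, hdd]; ring⟩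
  apply le_antisymm
  · rw [Iideal, Ideal.span_le]
    intro x hx
    rcases hx with hx | ⟨a, rfl⟩
    · rcases hx with rfl
      exact Ideal.mem_span_singleton.mpr hd5
    · simp only [SetLike.mem_coe]
      rw [Ideal.mem_span_singleton]
      set r : Zsqrtd (-5) := (a.re : Zsqrtd (-5)) with hr
      have h1 : d ∣ a - r := ⟨(a.im : Zsqrtd (-5)), by
        ext <;> simp [hd, hr, Zsqrtd.re_mul, Zsqrtd.im_mul]⟩
      have h2 : d ∣ r - r ^ 5 ^ m := by
        refine hd5.trans ?_
        obtain ⟨c, hc⟩ := int_fermat m a.re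
        refine ⟨-(c : Zsqrtd (-5)), ?_⟩
        have : ((a.re ^ 5 ^ m - a.re : ℤ) : Zsqrtd (-5)) = ((5 * c : ℤ) : Zsqrtd (-5)) := by
          rw [hc]
        push_cast at this
        rw [hr]
        linear_combination -this
      have h3 : d ∣ r ^ 5 ^ m - a ^ 5 ^ m := by
        have : (r - a) ∣ r ^ 5 ^ m - a ^ 5 ^ m := sub_dvd_pow_sub_pow r a _
        have h4 : d ∣ r - a := by rw [← neg_sub a r]; exact dvd_neg.mpr h1
        exact h4.trans this
      have := dvd_add (dvd_add h1 h2) h3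
      have heq : (a - r) + (r - r ^ 5 ^ m) + (r ^ 5 ^ m - a ^ 5 ^ m) = a - a ^ 5 ^ m := by ring
      rwa [heq] at this
  · rw [Ideal.span_le, Set.singleton_subset_iff]
    have h5 : (5 : Zsqrtd (-5)) ∈ Iideal 5 m (Zsqrtd (-5)) := by
      apply Ideal.subset_span
      exact Or.inl (by norm_num)
    have hsub : d - d ^ 5 ^ m ∈ Iideal 5 m (Zsqrtd (-5)) :=
      Ideal.subset_span (Or.inr ⟨d, rfl⟩)
    have hpow : d ^ 5 ^ m ∈ Iideal 5 m (Zsqrtd (-5)) := by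
      obtain ⟨k, hk⟩ : Odd (5 ^ m) := Odd.pow (⟨2, by norm_num⟩ : Odd 5)
      have hk1 : 1 ≤ k := by
        have : 5 ≤ 5 ^ m := Nat.le_self_pow (by omega) 5
        omega
      have : d ^ 5 ^ m = 5 * ((-1)^k * (5:Zsqrtd (-5))^(k-1) * d) := by
        rw [hk, pow_add, pow_mul, pow_two, hdd]
        have : (-5 : Zsqrtd (-5)) ^ k = (-1)^k * 5^k := by
          rw [show (-5 : Zsqrtd (-5)) = -1 * 5 by ring, mul_pow]
        rw [this]
        have h5k : (5:Zsqrtd (-5))^k = 5 * 5^(k-1) := by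
          conv_lhs => rw [← Nat.sub_add_cancel hk1]
          ring
        rw [h5k]; ring
      rw [this]
      exact Ideal.mul_mem_right _ _ h5
    have := Ideal.add_mem _ hsub hpow
    rwa [sub_add_cancel] at this
end
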